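/- Let q be a prime with q ≡ 7 or 17 (mod 24) (i.e. q ≡ ±7 (mod 24)). For every complex number s with Re(s) > 1, L(s, λ_q) = ζ(qs) ζ(s) · ∏_p ( 1 + ∑_{m=2}^{q-1} { ((m+1)/q) − (m/q) } · p^{-ms} ), where the product runs over all prime numbers p. -/

import Mathlib

open Filter

/-- `λ_q(n) = (τ(n)/q)` : the Legendre symbol mod `q` of the number of divisors of `n`. -/
noncomputable def lamq (q : ℕ) [Fact q.Prime] (n : ℕ) : ℂ :=
  (legendreSym q (n.divisors.card : ℤ) : ℂ)

/-!
Since `τ` is multiplicative and `(·/q)` completely multiplicative, `λ_q` is multiplicative with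
`λ_q(p^e) = χ(e+1)`, `χ = (·/q)`, so its Euler factor at `p` is `∑_e χ(e+1) x^e` with `x = p^{-s}`.
As `χ` is `q`-periodic with `χ(0) = 0`, multiplying by `(1 - x^q)(1 - x)` telescopes this series
to the polynomial `∑_{m<q} (χ(m+1) - χ(m)) x^m`, whose linear coefficient `χ(2) - χ(1)` vanishes
because `2` is a square mod `q` for `q ≡ ±1 (mod 8)`. The removed factors `(1 - p^{-qs})⁻¹` and
`(1 - p^{-s})⁻¹` are the Euler factors of `ζ(qs)` and `ζ(s)`.
-/

open Complex Finset

theorem one_sub_mul_sum_range_mul_pow {R : Type*} [CommRing R] {c : ℕ → R} {n : ℕ}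
    (h0 : c 0 = 0) (hn : c n = 0) (x : R) :
    (1 - x) * ∑ e ∈ range n, c (e + 1) * x ^ e = ∑ m ∈ range n, (c (m + 1) - c m) * x ^ m := by
  have shift : ∑ e ∈ range n, c (e + 1) * x ^ (e + 1) = ∑ m ∈ range n, c m * x ^ m := by
    have := sum_range_succ' (fun m => c m * x ^ m) n
    rw [sum_range_succ, hn, h0] at this
    simpa using this.symm
  rw [sub_mul, one_mul, mul_sum]
  simp only [sub_mul, sum_sub_distrib]
  rw [← shift]
  exact congrArg _ (sum_congr rfl fun e _ => by ring)

section PowerSeries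

variable {𝕜 : Type*} [NormedField 𝕜] {c : ℕ → 𝕜} {x : 𝕜}

theorem summable_mul_pow_of_bounded [CompleteSpace 𝕜] {C : ℝ} (hc : ∀ n, ‖c n‖ ≤ C)
    (hx : ‖x‖ < 1) : Summable fun n => c n * x ^ n := by
  refine .of_norm_bounded ((summable_geometric_of_lt_one (norm_nonneg x) hx).mul_left C)
    fun n => ?_
  rw [norm_mul, norm_pow]
  exact mul_le_mul_of_nonneg_right (hc n) (by positivity)

theorem one_sub_pow_mul_tsum_of_periodic {q : ℕ} (hc : Function.Periodic c q)
    (hsum : Summable fun e => c (e + 1) * x ^ e) :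
    (1 - x ^ q) * ∑' e, c (e + 1) * x ^ e = ∑ e ∈ range q, c (e + 1) * x ^ e := by
  have tail : ∑' e, c (e + q + 1) * x ^ (e + q) = x ^ q * ∑' e, c (e + 1) * x ^ e := by
    rw [← tsum_mul_left]
    exact tsum_congr fun e => by rw [add_right_comm, hc, pow_add]; ring
  have split := hsum.sum_add_tsum_nat_add q
  rw [tail] at split
  linear_combination -split

theorem one_sub_pow_mul_one_sub_mul_tsum_of_periodic [CompleteSpace 𝕜] {q : ℕ} {C : ℝ}
    (hc : Function.Periodic c q) (h0 : c 0 = 0) (hbound : ∀ n, ‖c n‖ ≤ C) (hx : ‖x‖ < 1) :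
    (1 - x ^ q) * (1 - x) * ∑' e, c (e + 1) * x ^ e =
      ∑ m ∈ range q, (c (m + 1) - c m) * x ^ m := by
  have hsum := summable_mul_pow_of_bounded (fun n => hbound (n + 1)) hx
  rw [mul_right_comm, one_sub_pow_mul_tsum_of_periodic hc hsum, mul_comm,
    one_sub_mul_sum_range_mul_pow h0 (by simpa [h0] using hc 0)]

end PowerSeries

theorem LSeries_eulerProduct_hasProd_of_mul_coprime {f : ℕ → ℂ} {s : ℂ} (h1 : f 1 = 1)
    (hmul : ∀ {m n : ℕ}, m.Coprime n → f (m * n) = f m * f n) (hf : LSeriesSummable f s) :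
    HasProd (fun p : Nat.Primes => ∑' e, f ((p : ℕ) ^ e) * ((p : ℂ) ^ (-s)) ^ e)
      (LSeries f s) := by
  have term_mul {m n : ℕ} (hmn : m.Coprime n) :
      LSeries.term f s (m * n) = LSeries.term f s m * LSeries.term f s n := by
    rcases eq_or_ne m 0 with rfl | hm
    · simp
    rcases eq_or_ne n 0 with rfl | hn
    · simp
    simp only [LSeries.term_of_ne_zero (mul_ne_zero hm hn), LSeries.term_of_ne_zero hm,
      LSeries.term_of_ne_zero hn, hmul hmn, Nat.cast_mul, natCast_mul_natCast_cpow,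
      mul_div_mul_comm]
  have term_prime_pow (p : Nat.Primes) (e : ℕ) :
      LSeries.term f s ((p : ℕ) ^ e) = f ((p : ℕ) ^ e) * ((p : ℂ) ^ (-s)) ^ e := by
    rw [LSeries.term_of_ne_zero (pow_ne_zero _ p.prop.ne_zero), div_eq_mul_inv, ← cpow_neg,
      Nat.cast_pow, ← natCast_cpow_natCast_mul, cpow_nat_mul]
  have := EulerProduct.eulerProduct_hasProd (f := LSeries.term f s) (by simp [h1]) term_mul
    (summable_norm_iff.mpr hf) (LSeries.term_zero f s)
  simp only [term_prime_pow] at this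
  exact this

section Legendre

variable (q : ℕ) [Fact q.Prime]

theorem norm_legendreSym_le_one (a : ℤ) : ‖((legendreSym q a : ℤ) : ℂ)‖ ≤ 1 := by
  rcases eq_or_ne (a : ZMod q) 0 with h | h
  · simp [(legendreSym.eq_zero_iff q a).mpr h]
  · rcases legendreSym.eq_one_or_neg_one q h with h' | h' <;> simp [h']

theorem legendreSym_natCast_periodic :
    Function.Periodic (fun k : ℕ => ((legendreSym q k : ℤ) : ℂ)) q := by
  intro k
  simp [legendreSym]

theorem legendreSym_two_eq_one (hq : q % 8 = 1 ∨ q % 8 = 7) : legendreSym q 2 = 1 := by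
  rw [legendreSym.at_two (by omega), ZMod.χ₈_nat_eq_if_mod_eight, if_neg (by omega), if_pos hq]

theorem sum_range_legendreSym_sub_mul_pow (hq2 : legendreSym q 2 = 1) (x : ℂ) :
    ∑ m ∈ range q, (((legendreSym q (m + 1 : ℕ) : ℤ) : ℂ) - ((legendreSym q m : ℤ) : ℂ)) * x ^ m =
      1 + ∑ m ∈ Icc 2 (q - 1),
        ((legendreSym q ((m : ℤ) + 1) - legendreSym q (m : ℤ) : ℤ) : ℂ) * x ^ m := by
  have hq : 2 ≤ q := (Fact.out : q.Prime).two_le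
  rw [← sum_range_add_sum_Ico _ hq, show Icc 2 (q - 1) = Ico 2 q by
    rw [← Ico_add_one_right_eq_Icc, Nat.sub_add_cancel (by omega)]]
  congr 1
  · simp [sum_range_succ, hq2]
  · exact sum_congr rfl fun m _ => by push_cast; ring

theorem lamq_one : lamq q 1 = 1 := by
  simp [lamq]

theorem lamq_mul_of_coprime {m n : ℕ} (h : m.Coprime n) :
    lamq q (m * n) = lamq q m * lamq q n := by
  simp [lamq, Nat.Coprime.card_divisors_mul h, legendreSym.mul]

theorem lamq_prime_pow {p : ℕ} (hp : p.Prime) (e : ℕ) :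
    lamq q (p ^ e) = legendreSym q ((e + 1 : ℕ) : ℤ) := by
  simp [lamq, Nat.divisors_prime_pow hp]

theorem norm_lamq_le_one (n : ℕ) : ‖lamq q n‖ ≤ 1 :=
  norm_legendreSym_le_one q _

theorem lamq_eulerFactor (hq2 : legendreSym q 2 = 1) {s : ℂ} (hs : 0 < s.re) (p : Nat.Primes) :
    (∑' e, lamq q ((p : ℕ) ^ e) * ((p : ℂ) ^ (-s)) ^ e) * (1 - (p : ℂ) ^ (-(q * s))) *
        (1 - (p : ℂ) ^ (-s)) =
      1 + ∑ m ∈ Icc 2 (q - 1),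
        ((legendreSym q ((m : ℤ) + 1) - legendreSym q (m : ℤ) : ℤ) : ℂ) *
          ((p : ℕ) : ℂ) ^ (-((m : ℂ) * s)) := by
  have hx : ‖(p : ℂ) ^ (-s)‖ < 1 := by
    rw [norm_natCast_cpow_of_pos p.prop.pos]
    exact Real.rpow_lt_one_of_one_lt_of_neg (by exact_mod_cast p.prop.one_lt) (by simpa using hs)
  simp_rw [lamq_prime_pow q p.prop, ← mul_neg, cpow_nat_mul]
  rw [mul_rotate, one_sub_pow_mul_one_sub_mul_tsum_of_periodic (legendreSym_natCast_periodic q)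
    (by simp) (norm_legendreSym_le_one q ·) hx, sum_range_legendreSym_sub_mul_pow q hq2]

end Legendre

theorem dirichlet_series_lamq_pm7_mod24 (q : ℕ) [Fact q.Prime]
    (hq : q % 24 = 7 ∨ q % 24 = 17) (s : ℂ) (hs : 1 < s.re) :
    LSeries (lamq q) s =
      riemannZeta (q * s) * riemannZeta s *
        ∏' p : Nat.Primes,
          (1 + ∑ m ∈ Finset.Icc 2 (q - 1),
            ((legendreSym q ((m : ℤ) + 1) - legendreSym q (m : ℤ) : ℤ) : ℂ) *
              ((p : ℕ) : ℂ) ^ (-((m : ℂ) * s))) := by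
  have hq2 : legendreSym q 2 = 1 := legendreSym_two_eq_one q (by omega)
  have hqs : 1 < ((q : ℂ) * s).re := by
    have : (1 : ℝ) ≤ q := by exact_mod_cast (Fact.out : q.Prime).one_lt.le
    simp only [mul_re, natCast_re, natCast_im, zero_mul, sub_zero]
    nlinarith
  have hζqs := riemannZeta_ne_zero_of_one_lt_re hqs
  have hζs := riemannZeta_ne_zero_of_one_lt_re hs
  have hL := LSeries_eulerProduct_hasProd_of_mul_coprime (lamq_one q) (lamq_mul_of_coprime q)
    (LSeriesSummable_of_bounded_of_one_lt_re (fun n _ => norm_lamq_le_one q n) hs)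
  have hres := (hL.mul ((riemannZeta_eulerProduct_hasProd hqs).inv₀ hζqs)).mul
    ((riemannZeta_eulerProduct_hasProd hs).inv₀ hζs)
  simp only [inv_inv, lamq_eulerFactor q hq2 (zero_lt_one.trans hs)] at hres
  rw [hres.tprod_eq]
  field_simp
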